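/- arXiv:1110.1433 — 2 statements merged into one kernel-verified Lean document; each statement's English description precedes it below -/
import Mathlib

section
/- Let Λ be a k-graph. Define C_r(Λ) to be the free abelian group on Q_r(Λ) and ∂_r : C_r(Λ) → C_{r−1}(Λ) by ∂_r(λ) = Σ_{ℓ=0}^{1} Σ_{i=1}^{r} (−1)^{i+ℓ} F_i^ℓ(λ) for λ ∈ Q_r(Λ). Then ∂_r ∘ ∂_{r+1} = 0 for all r ≥ 1, so (C_*(Λ), ∂_*) is a chain complex. -/
namespace KGH

/-- A `k`-graph: a (small, nonempty) category with a degree functor `d : Λ → ℕ^k`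
satisfying the unique factorisation property.  Composition `comp f g` is the paper's
`f g`, defined when `s(f) = r(g)`, i.e. `dom f = cod g`. -/
structure KGraph (k : ℕ) where
  Obj : Type
  Mor : Type
  dom : Mor → Obj
  cod : Mor → Obj
  idm : Obj → Mor
  comp : Mor → Mor → Mor
  d : Mor → Fin k → ℕ
  nonempty : Nonempty Obj
  dom_idm : ∀ o, dom (idm o) = o
  cod_idm : ∀ o, cod (idm o) = o
  d_idm : ∀ o, d (idm o) = 0
  dom_comp : ∀ f g, dom f = cod g → dom (comp f g) = dom g
  cod_comp : ∀ f g, dom f = cod g → cod (comp f g) = cod f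
  d_comp : ∀ f g, dom f = cod g → d (comp f g) = d f + d g
  idm_comp : ∀ f, comp (idm (cod f)) f = f
  comp_idm : ∀ f, comp f (idm (dom f)) = f
  comp_assoc : ∀ f g h, dom f = cod g → dom g = cod h →
      comp (comp f g) h = comp f (comp g h)
  factor : ∀ f (m n : Fin k → ℕ), d f = m + n →
      ∃! p : Mor × Mor, dom p.1 = cod p.2 ∧ d p.1 = m ∧ d p.2 = n ∧ comp p.1 p.2 = f

namespace KGraph

variable {k : ℕ}

/-- the total degree `|λ|` of a morphism. -/
def deg (Λ : KGraph k) (f : Λ.Mor) : ℕ := ∑ i, Λ.d f i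

/-- split `f` as `f = p.1 p.2` with `d p.1 = m` (junk value if `m ≰ d f`). -/
noncomputable def splitAt (Λ : KGraph k) (f : Λ.Mor) (m : Fin k → ℕ) : Λ.Mor × Λ.Mor :=
  if h : Λ.d f = m + (Λ.d f - m) then Classical.choose (Λ.factor f m (Λ.d f - m) h)
  else (f, f)

/-- the factorisation segment `λ(m,n)`. -/
noncomputable def seg (Λ : KGraph k) (f : Λ.Mor) (m n : Fin k → ℕ) : Λ.Mor :=
  (Λ.splitAt (Λ.splitAt f m).2 (n - m)).1

/-- the (sorted) list of coordinates in which `f` has nonzero degree. -/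
noncomputable def suppList (Λ : KGraph k) (f : Λ.Mor) : List (Fin k) :=
  (Finset.univ.filter fun i => Λ.d f i ≠ 0).sort (· ≤ ·)

/-- the face maps `F_j^ℓ` (`j` is 1-based; `ℓ = false` is `F_j^0`, `ℓ = true` is `F_j^1`). -/
noncomputable def face (Λ : KGraph k) (j : ℕ) (ℓ : Bool) (f : Λ.Mor) : Λ.Mor :=
  match (Λ.suppList f)[j-1]? with
  | none => f
  | some i =>
    if ℓ then Λ.seg f (Pi.single i 1) (Λ.d f)
    else Λ.seg f 0 (Λ.d f - Pi.single i 1)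

/-- `Q_r(Λ)`, the set of `r`-cubes: morphisms of degree `≤ 1_k` with `|d λ| = r`. -/
def QSet (Λ : KGraph k) (r : ℕ) : Set Λ.Mor :=
  {f | (∀ i, Λ.d f i ≤ 1) ∧ Λ.deg f = r}

/-- the (total) group of chains. -/
abbrev Chain (Λ : KGraph k) : Type := Λ.Mor →₀ ℤ

/-- the boundary of a generator: `∂ λ = Σ_{ℓ,i} (-1)^{i+ℓ} F_i^ℓ(λ)`. -/
noncomputable def bdFun (Λ : KGraph k) (f : Λ.Mor) : Λ.Chain :=
  ∑ j ∈ Finset.range (Λ.deg f),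
    ((-1 : ℤ) ^ (j + 1) • Finsupp.single (Λ.face (j+1) false f) (1 : ℤ)
      + (-1 : ℤ) ^ j • Finsupp.single (Λ.face (j+1) true f) (1 : ℤ))

/-- the boundary map `∂` on chains. -/
noncomputable def bd (Λ : KGraph k) : Λ.Chain →ₗ[ℤ] Λ.Chain :=
  Finsupp.lift Λ.Chain ℤ Λ.Mor Λ.bdFun

/-- `C_r(Λ) = ℤ Q_r(Λ)`, as the submodule of chains supported on `Q_r(Λ)`. -/
noncomputable def CS (Λ : KGraph k) (r : ℕ) : Submodule ℤ Λ.Chain :=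
  Finsupp.supported ℤ ℤ (Λ.QSet r)

/-- the `r`-cycles `ker ∂_r`. -/
noncomputable def cycles (Λ : KGraph k) (r : ℕ) : Submodule ℤ Λ.Chain :=
  Λ.CS r ⊓ LinearMap.ker Λ.bd

/-- the `r`-boundaries `im ∂_{r+1}`. -/
noncomputable def bdries (Λ : KGraph k) (r : ℕ) : Submodule ℤ Λ.Chain :=
  (Λ.CS (r+1)).map Λ.bd

/-- the homology `H_r(Λ) = ker ∂_r / im ∂_{r+1}`. -/
noncomputable abbrev H (Λ : KGraph k) (r : ℕ) :=
  Λ.cycles r ⧸ ((Λ.bdries r).comap (Λ.cycles r).subtype)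

/-- the relation `{(r(λ), s(λ))}` on vertices. -/
def rel (Λ : KGraph k) : Λ.Obj → Λ.Obj → Prop :=
  fun u v => ∃ f : Λ.Mor, Λ.cod f = u ∧ Λ.dom f = v

/-- connectedness: the equivalence relation generated by `rel` is total. -/
def Connected (Λ : KGraph k) : Prop :=
  ∀ u v : Λ.Obj, Relation.EqvGen Λ.rel u v

/-- the setoid of connected components. -/
def compSetoid (Λ : KGraph k) : Setoid Λ.Obj :=
  ⟨Relation.EqvGen Λ.rel, Relation.EqvGen.is_equivalence _⟩

/-- `s(f, m)` for an orientation `m ∈ {1, -1}`. -/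
def sV (Λ : KGraph k) (f : Λ.Mor) (m : ℤ) : Λ.Obj :=
  if m = 1 then Λ.dom f else Λ.cod f

/-- `r(f, m) = s(f, -m)`. -/
def rV (Λ : KGraph k) (f : Λ.Mor) (m : ℤ) : Λ.Obj := Λ.sV f (-m)

/-- an undirected path: a sequence of edges with orientations whose endpoints match. -/
def IsUPath (Λ : KGraph k) (n : ℕ) (g : Fin n → Λ.Mor) (m : Fin n → ℤ) : Prop :=
  (∀ i, g i ∈ Λ.QSet 1) ∧ (∀ i, m i = 1 ∨ m i = -1) ∧
  ∀ (i : ℕ) (h : i + 1 < n),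
    Λ.sV (g ⟨i, Nat.lt_of_succ_lt h⟩) (m ⟨i, Nat.lt_of_succ_lt h⟩) =
    Λ.rV (g ⟨i+1, h⟩) (m ⟨i+1, h⟩)

/-- the source of an undirected path. -/
def pathSrc (Λ : KGraph k) {n : ℕ} (g : Fin (n+1) → Λ.Mor) (m : Fin (n+1) → ℤ) : Λ.Obj :=
  Λ.sV (g (Fin.last n)) (m (Fin.last n))

/-- the range of an undirected path. -/
def pathRng (Λ : KGraph k) {n : ℕ} (g : Fin (n+1) → Λ.Mor) (m : Fin (n+1) → ℤ) : Λ.Obj :=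
  Λ.rV (g 0) (m 0)

/-- the trail `Σᵢ mᵢ gᵢ` of an undirected path. -/
noncomputable def trailOf (Λ : KGraph k) {n : ℕ} (g : Fin n → Λ.Mor) (m : Fin n → ℤ) :
    Λ.Chain :=
  ∑ i, m i • Finsupp.single (g i) (1 : ℤ)

/-- `h` is a simple closed trail. -/
def IsSimpleClosedTrail (Λ : KGraph k) (h : Λ.Chain) : Prop :=
  ∃ (n : ℕ) (g : Fin (n+1) → Λ.Mor) (m : Fin (n+1) → ℤ),
    Λ.IsUPath (n+1) g m ∧ Λ.pathSrc g m = Λ.pathRng g m ∧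
    Function.Injective (fun i => Λ.sV (g i) (m i)) ∧
    h = Λ.trailOf g m

end KGraph

end KGH

/-!
Every face of a cube `λ` is a segment `λ(m, n)`, and by unique factorisation a segment of a
segment of `λ` is again a segment of `λ`. So both sides of the cubical identity
`F_a^ℓ ∘ F_b^m = F_{b-1}^m ∘ F_a^ℓ` (`a < b`) are the same segment of `λ`. Writing
`∂ = ∑_j (-1)^j (F_{j+1}^1 - F_{j+1}^0)` on `r`-chains, the terms of `∂ ∘ ∂` then cancel in pairs
exactly as for simplicial sets.
-/

open Finset in
/-- The term `(a, b)` with `a < b` cancels against `(b - 1, a)`, whose sign is opposite. -/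
lemma alternating_double_sum_eq_zero {M : Type*} [AddCommGroup M] (r : ℕ) (G : ℕ → ℕ → M)
    (hG : ∀ a b, a < b → b ≤ r → G a b = G (b - 1) a) :
    ∑ a ∈ range r, ∑ b ∈ range (r + 1), (-1 : ℤ) ^ (a + b) • G a b = 0 := by
  have sign : ∀ n (x : M), (-1 : ℤ) ^ n • x + (-1 : ℤ) ^ (n + 1) • x = 0 := fun n x => by
    rw [pow_succ, mul_neg_one, neg_smul, add_neg_cancel]
  rw [← sum_product']
  refine sum_involution (fun p _ => if p.1 < p.2 then (p.2 - 1, p.1) else (p.2, p.1 + 1))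
    ?_ ?_ ?_ ?_
  · rintro ⟨a, b⟩ hp
    simp only [mem_product, mem_range] at hp
    split_ifs with h <;> dsimp only at h ⊢
    · obtain ⟨c, rfl⟩ : ∃ c, b = c + 1 := ⟨b - 1, by omega⟩
      rw [hG a _ h (by omega), Nat.add_sub_cancel, add_comm c a, ← add_assoc]
      exact (add_comm _ _).trans (sign _ _)
    · have := hG b (a + 1) (by omega) (by omega)
      rw [Nat.add_sub_cancel] at this
      rw [← this, show b + (a + 1) = a + b + 1 by omega]
      exact sign _ _
  · rintro ⟨a, b⟩ _ _
    split_ifs <;> simp only [ne_eq, Prod.mk.injEq] <;> omega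
  · rintro ⟨a, b⟩ hp
    simp only [mem_product, mem_range] at hp ⊢
    split_ifs <;> omega
  · rintro ⟨a, b⟩ _
    by_cases h : a < b
    · simp only [h, if_true, show ¬ b - 1 < a by omega, if_false,
        Nat.sub_add_cancel (by omega : 1 ≤ b)]
    · simp only [h, if_false, show b < a + 1 by omega, if_true, Nat.add_sub_cancel]

namespace KGH.KGraph

variable {k : ℕ} (Λ : KGraph k)

section Factorisation

variable {f : Λ.Mor} {m n p q : Fin k → ℕ}

lemma splitAt_spec (h : m ≤ Λ.d f) :
    Λ.dom (Λ.splitAt f m).1 = Λ.cod (Λ.splitAt f m).2 ∧ Λ.d (Λ.splitAt f m).1 = m ∧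
      Λ.d (Λ.splitAt f m).2 = Λ.d f - m ∧ Λ.comp (Λ.splitAt f m).1 (Λ.splitAt f m).2 = f := by
  have h' : Λ.d f = m + (Λ.d f - m) := (add_tsub_cancel_of_le h).symm
  rw [splitAt, dif_pos h']
  exact (Classical.choose_spec (Λ.factor f m (Λ.d f - m) h')).1

lemma splitAt_eq {a b : Λ.Mor} (hab : Λ.dom a = Λ.cod b) (ha : Λ.d a = m)
    (hf : Λ.comp a b = f) : Λ.splitAt f m = (a, b) := by
  have hdf : Λ.d f = m + Λ.d b := by rw [← hf, Λ.d_comp a b hab, ha]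
  have h' : Λ.d f = m + (Λ.d f - m) := by rw [hdf, add_tsub_cancel_left]
  rw [splitAt, dif_pos h']
  exact ((Classical.choose_spec (Λ.factor f m _ h')).2 (a, b)
    ⟨hab, ha, by rw [hdf, add_tsub_cancel_left], hf⟩).symm

/-- `hd f m` and `tl f m` are the segments `f(0, m)` and `f(m, d f)` of the paper. -/
noncomputable def hd (f : Λ.Mor) (m : Fin k → ℕ) : Λ.Mor := (Λ.splitAt f m).1

noncomputable def tl (f : Λ.Mor) (m : Fin k → ℕ) : Λ.Mor := (Λ.splitAt f m).2

lemma dom_hd (h : m ≤ Λ.d f) : Λ.dom (Λ.hd f m) = Λ.cod (Λ.tl f m) := (Λ.splitAt_spec h).1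

lemma d_hd (h : m ≤ Λ.d f) : Λ.d (Λ.hd f m) = m := (Λ.splitAt_spec h).2.1

lemma d_tl (h : m ≤ Λ.d f) : Λ.d (Λ.tl f m) = Λ.d f - m := (Λ.splitAt_spec h).2.2.1

lemma comp_hd_tl (h : m ≤ Λ.d f) : Λ.comp (Λ.hd f m) (Λ.tl f m) = f :=
  (Λ.splitAt_spec h).2.2.2

lemma cod_hd (h : m ≤ Λ.d f) : Λ.cod (Λ.hd f m) = Λ.cod f :=
  (Λ.cod_comp _ _ (Λ.dom_hd h)).symm.trans (congrArg Λ.cod (Λ.comp_hd_tl h))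

lemma le_d_tl (h : m + n ≤ Λ.d f) : n ≤ Λ.d (Λ.tl f m) := by
  rw [Λ.d_tl (le_trans le_self_add h)]
  exact le_tsub_of_add_le_left h

lemma splitAt_add (h : m + n ≤ Λ.d f) :
    Λ.splitAt f (m + n) = (Λ.comp (Λ.hd f m) (Λ.hd (Λ.tl f m) n), Λ.tl (Λ.tl f m) n) := by
  have hm : m ≤ Λ.d f := le_trans le_self_add h
  have hn := Λ.le_d_tl h
  have hcod : Λ.cod (Λ.hd (Λ.tl f m) n) = Λ.dom (Λ.hd f m) := by
    rw [Λ.cod_hd hn, Λ.dom_hd hm]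
  refine Λ.splitAt_eq ?_ ?_ ?_
  · rw [Λ.dom_comp _ _ hcod.symm, Λ.dom_hd hn]
  · rw [Λ.d_comp _ _ hcod.symm, Λ.d_hd hm, Λ.d_hd hn]
  · rw [Λ.comp_assoc _ _ _ hcod.symm (Λ.dom_hd hn), Λ.comp_hd_tl hn, Λ.comp_hd_tl hm]

lemma tl_tl (h : m + n ≤ Λ.d f) : Λ.tl (Λ.tl f m) n = Λ.tl f (m + n) :=
  (congrArg Prod.snd (Λ.splitAt_add h)).symm

lemma splitAt_hd_add (h : m + n ≤ Λ.d f) :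
    Λ.splitAt (Λ.hd f (m + n)) m = (Λ.hd f m, Λ.hd (Λ.tl f m) n) := by
  have hm : m ≤ Λ.d f := le_trans le_self_add h
  have hn := Λ.le_d_tl h
  refine Λ.splitAt_eq ?_ (Λ.d_hd hm) (congrArg Prod.fst (Λ.splitAt_add h)).symm
  rw [Λ.cod_hd hn, Λ.dom_hd hm]

lemma hd_hd (hmn : m ≤ n) (hn : n ≤ Λ.d f) : Λ.hd (Λ.hd f n) m = Λ.hd f m := by
  have e : m + (n - m) = n := add_tsub_cancel_of_le hmn
  have := congrArg Prod.fst (Λ.splitAt_hd_add (e.symm ▸ hn : m + (n - m) ≤ Λ.d f))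
  rwa [e] at this

lemma tl_hd (hmn : m ≤ n) (hn : n ≤ Λ.d f) :
    Λ.tl (Λ.hd f n) m = Λ.hd (Λ.tl f m) (n - m) := by
  have e : m + (n - m) = n := add_tsub_cancel_of_le hmn
  have := congrArg Prod.snd (Λ.splitAt_hd_add (e.symm ▸ hn : m + (n - m) ≤ Λ.d f))
  rwa [e] at this

lemma seg_eq_hd_tl : Λ.seg f m n = Λ.hd (Λ.tl f m) (n - m) := rfl

lemma d_seg (hmn : m ≤ n) (hn : n ≤ Λ.d f) : Λ.d (Λ.seg f m n) = n - m := by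
  rw [seg_eq_hd_tl, Λ.d_hd]
  rw [Λ.d_tl (hmn.trans hn)]
  exact tsub_le_tsub_right hn m

lemma seg_seg (hmn : m ≤ n) (hn : n ≤ Λ.d f) (hpq : p ≤ q) (hq : q ≤ n - m) :
    Λ.seg (Λ.seg f m n) p q = Λ.seg f (m + p) (m + q) := by
  have hm : m ≤ Λ.d f := hmn.trans hn
  have hmp : m + p ≤ Λ.d f :=
    (add_le_add le_rfl (hpq.trans hq)).trans ((add_tsub_cancel_of_le hmn).symm ▸ hn)
  have hnm : n - m ≤ Λ.d (Λ.tl f m) := by rw [Λ.d_tl hm]; exact tsub_le_tsub_right hn m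
  have hp : p ≤ n - m := hpq.trans hq
  rw [seg_eq_hd_tl, seg_eq_hd_tl, Λ.tl_hd hp hnm, Λ.hd_hd (tsub_le_tsub_right hq p), Λ.tl_tl hmp,
    seg_eq_hd_tl, add_tsub_add_eq_tsub_left]
  rw [Λ.d_tl (Λ.le_d_tl hmp), Λ.d_tl hm]
  exact tsub_le_tsub_right (tsub_le_tsub_right hn m) p

end Factorisation

section Faces

variable {f : Λ.Mor} {i : Fin k} {j : ℕ}

lemma mem_suppList : i ∈ Λ.suppList f ↔ Λ.d f i ≠ 0 := by
  simp [suppList]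

lemma length_suppList (hf : ∀ p, Λ.d f p ≤ 1) : (Λ.suppList f).length = Λ.deg f := by
  rw [suppList, Finset.length_sort, deg, ← Finset.sum_filter_ne_zero, Finset.card_eq_sum_ones]
  refine Finset.sum_congr rfl fun p hp => ?_
  have := hf p
  have := (Finset.mem_filter.mp hp).2
  omega

lemma single_le_d (hi : i ∈ Λ.suppList f) : Pi.single i 1 ≤ Λ.d f := by
  intro p
  rcases eq_or_ne p i with rfl | hp
  · simpa [Nat.one_le_iff_ne_zero] using (Λ.mem_suppList).mp hi
  · simp [hp]

lemma face_succ (h : (Λ.suppList f)[j]? = some i) (ℓ : Bool) :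
    Λ.face (j + 1) ℓ f =
      if ℓ then Λ.seg f (Pi.single i 1) (Λ.d f) else Λ.seg f 0 (Λ.d f - Pi.single i 1) := by
  simp [face, h]

lemma d_face_succ (h : (Λ.suppList f)[j]? = some i) (ℓ : Bool) :
    Λ.d (Λ.face (j + 1) ℓ f) = Λ.d f - Pi.single i 1 := by
  have hi : Pi.single i 1 ≤ Λ.d f := Λ.single_le_d (List.mem_of_getElem? h)
  cases ℓ
  · rw [Λ.face_succ h, if_neg Bool.false_ne_true, Λ.d_seg (by simp) tsub_le_self, tsub_zero]
  · simpa [Λ.face_succ h] using Λ.d_seg hi le_rfl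

lemma face_succ_mem_QSet {r : ℕ} (hf : f ∈ Λ.QSet (r + 1)) (hj : j < r + 1) (ℓ : Bool) :
    Λ.face (j + 1) ℓ f ∈ Λ.QSet r := by
  have hj' : j < (Λ.suppList f).length := by rwa [Λ.length_suppList hf.1, hf.2]
  have h := List.getElem?_eq_getElem hj'
  have hi := Λ.single_le_d (List.getElem_mem hj')
  refine ⟨fun p => ?_, ?_⟩
  · rw [Λ.d_face_succ h]
    exact tsub_le_self.trans (hf.1 p)
  · rw [deg, Λ.d_face_succ h]
    simp only [Pi.sub_apply]
    rw [Finset.sum_tsub_distrib _ fun p _ => hi p, ← deg, hf.2]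
    simp

lemma suppList_face_succ (hf : ∀ p, Λ.d f p ≤ 1) (h : (Λ.suppList f)[j]? = some i) (ℓ : Bool) :
    Λ.suppList (Λ.face (j + 1) ℓ f) = (Λ.suppList f).eraseIdx j := by
  obtain ⟨hj, rfl⟩ := List.getElem?_eq_some_iff.mp h
  have hsupp : (Finset.univ.filter fun p => Λ.d (Λ.face (j + 1) ℓ f) p ≠ 0)
      = (Finset.univ.filter fun p => Λ.d f p ≠ 0).erase (Λ.suppList f)[j] := by
    ext p
    simp only [Finset.mem_filter, Finset.mem_erase, Finset.mem_univ, true_and,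
      Λ.d_face_succ h, Pi.sub_apply]
    rcases eq_or_ne p (Λ.suppList f)[j] with rfl | hp
    · have hdi := (Λ.mem_suppList).mp (List.getElem_mem hj)
      have := hf (Λ.suppList f)[j]
      simp only [Pi.single_eq_same]
      omega
    · simp [hp]
  have hperm : (Λ.suppList (Λ.face (j + 1) ℓ f)).Perm ((Λ.suppList f).eraseIdx j) := by
    have hnd : (Λ.suppList f).Nodup := Finset.sort_nodup _ _
    rw [← hnd.erase_getElem j hj, suppList, hsupp, ← Multiset.coe_eq_coe,
      Finset.sort_eq, Finset.erase_val, ← Multiset.coe_erase]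
    congr 1
    simp [suppList]
  exact hperm.eq_of_pairwise' (Finset.pairwise_sort _ _)
    ((Finset.pairwise_sort _ _).sublist (List.eraseIdx_sublist _ _))

lemma single_add_single_le_d {a b : ℕ} (hab : a ≠ b) (ha : a < (Λ.suppList f).length)
    (hb : b < (Λ.suppList f).length) :
    Pi.single (Λ.suppList f)[a] 1 + Pi.single (Λ.suppList f)[b] 1 ≤ Λ.d f := by
  have hne : (Λ.suppList f)[a] ≠ (Λ.suppList f)[b] :=
    fun h => hab (((Finset.sort_nodup _ _).getElem_inj_iff).mp h)
  have hda := (Λ.mem_suppList).mp (List.getElem_mem ha)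
  have hdb := (Λ.mem_suppList).mp (List.getElem_mem hb)
  intro x
  rcases eq_or_ne x (Λ.suppList f)[a] with rfl | hxa
  · simp only [Pi.add_apply, Pi.single_eq_same, Pi.single_eq_of_ne hne]; omega
  rcases eq_or_ne x (Λ.suppList f)[b] with rfl | hxb
  · simp only [Pi.add_apply, Pi.single_eq_same, Pi.single_eq_of_ne hxa]; omega
  · simp [hxa, hxb]

lemma face_face (hf : ∀ p, Λ.d f p ≤ 1) {a b : ℕ} (hab : a < b)
    (hb : b < (Λ.suppList f).length) (ℓ m : Bool) :
    Λ.face (a + 1) ℓ (Λ.face (b + 1) m f) = Λ.face b m (Λ.face (a + 1) ℓ f) := by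
  obtain ⟨c, rfl⟩ : ∃ c, b = c + 1 := ⟨b - 1, by omega⟩
  have ha : a < (Λ.suppList f).length := by omega
  have hsum := Λ.single_add_single_le_d hab.ne ha hb
  have hfa : (Λ.suppList f)[a]? = some (Λ.suppList f)[a] := List.getElem?_eq_getElem ha
  have hfb : (Λ.suppList f)[c + 1]? = some (Λ.suppList f)[c + 1] := List.getElem?_eq_getElem hb
  have hga : (Λ.suppList (Λ.face (c + 1 + 1) m f))[a]? = some (Λ.suppList f)[a] := by
    rw [Λ.suppList_face_succ hf hfb, List.getElem?_eraseIdx_of_lt hab, hfa]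
  have hgb : (Λ.suppList (Λ.face (a + 1) ℓ f))[c]? = some (Λ.suppList f)[c + 1] := by
    rw [Λ.suppList_face_succ hf hfa, List.getElem?_eraseIdx_of_ge (by omega), hfb]
  rw [Λ.face_succ hga, Λ.face_succ hgb, Λ.d_face_succ hfa, Λ.d_face_succ hfb, Λ.face_succ hfa,
    Λ.face_succ hfb]
  generalize (Pi.single (Λ.suppList f)[a] 1 : Fin k → ℕ) = ea at hsum ⊢
  generalize (Pi.single (Λ.suppList f)[c + 1] 1 : Fin k → ℕ) = eb at hsum ⊢
  cases ℓ <;> cases m <;> simp only [Bool.false_eq_true, if_true, if_false] <;>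
    rw [Λ.seg_seg, Λ.seg_seg] <;>
    first
    | congr 1 <;> funext x
    | intro x
  all_goals
    have := hsum x
    simp only [Pi.add_apply, Pi.sub_apply, Pi.zero_apply] at this ⊢
    omega

end Faces

section Chains

/-- `F_j^1 - F_j^0` on chains: the paper's `∑_ℓ (-1)^(j+ℓ) F_j^ℓ` is `(-1)^(j+1) • faceDiff j`. -/
noncomputable def faceDiff (j : ℕ) : Λ.Chain →ₗ[ℤ] Λ.Chain :=
  Finsupp.lmapDomain ℤ ℤ (Λ.face j true) - Finsupp.lmapDomain ℤ ℤ (Λ.face j false)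

lemma faceDiff_single (j : ℕ) (f : Λ.Mor) :
    Λ.faceDiff j (Finsupp.single f 1) =
      Finsupp.single (Λ.face j true f) 1 - Finsupp.single (Λ.face j false f) 1 := by
  simp [faceDiff]

lemma bd_single (f : Λ.Mor) : Λ.bd (Finsupp.single f 1) = Λ.bdFun f := by
  simp [bd]

lemma eqOn_CS {r : ℕ} {φ ψ : Λ.Chain →ₗ[ℤ] Λ.Chain}
    (h : ∀ f ∈ Λ.QSet r, φ (Finsupp.single f 1) = ψ (Finsupp.single f 1)) {x : Λ.Chain}
    (hx : x ∈ Λ.CS r) : φ x = ψ x := by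
  rw [CS, Finsupp.supported_eq_span_single] at hx
  exact LinearMap.eqOn_span (by rintro _ ⟨f, hf, rfl⟩; exact h f hf) hx

lemma bd_eq_sum_faceDiff {r : ℕ} {x : Λ.Chain} (hx : x ∈ Λ.CS r) :
    Λ.bd x = ∑ j ∈ Finset.range r, (-1 : ℤ) ^ j • Λ.faceDiff (j + 1) x := by
  have := Λ.eqOn_CS (φ := Λ.bd) (ψ := ∑ j ∈ Finset.range r, (-1 : ℤ) ^ j • Λ.faceDiff (j + 1))
    (fun f hf => ?_) hx
  · simpa only [LinearMap.sum_apply, LinearMap.smul_apply] using this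
  rw [Λ.bd_single, bdFun, hf.2, LinearMap.sum_apply]
  refine Finset.sum_congr rfl fun j _ => ?_
  rw [LinearMap.smul_apply, faceDiff_single, pow_succ, mul_neg_one, neg_smul, smul_sub]
  abel

lemma faceDiff_mem_CS {r j : ℕ} (hj : j < r + 1) {x : Λ.Chain} (hx : x ∈ Λ.CS (r + 1)) :
    Λ.faceDiff (j + 1) x ∈ Λ.CS r := by
  have himage : ∀ ℓ, Λ.face (j + 1) ℓ '' Λ.QSet (r + 1) ⊆ Λ.QSet r := by
    rintro ℓ _ ⟨f, hf, rfl⟩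
    exact Λ.face_succ_mem_QSet hf hj ℓ
  have hmap : ∀ ℓ, Finsupp.lmapDomain ℤ ℤ (Λ.face (j + 1) ℓ) x ∈ Λ.CS r := fun ℓ =>
    Finsupp.supported_mono (himage ℓ)
      (Finsupp.lmapDomain_supported ℤ ℤ _ _ ▸ Submodule.mem_map_of_mem hx)
  exact Submodule.sub_mem _ (hmap true) (hmap false)

lemma bd_mem_CS {r : ℕ} {x : Λ.Chain} (hx : x ∈ Λ.CS (r + 1)) : Λ.bd x ∈ Λ.CS r := by
  rw [Λ.bd_eq_sum_faceDiff hx]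
  exact Submodule.sum_mem _ fun j hj =>
    Submodule.smul_mem _ _ (Λ.faceDiff_mem_CS (Finset.mem_range.mp hj) hx)

lemma faceDiff_comm {r a b : ℕ} (hab : a < b) (hb : b ≤ r) {x : Λ.Chain}
    (hx : x ∈ Λ.CS (r + 1)) :
    Λ.faceDiff (a + 1) (Λ.faceDiff (b + 1) x) = Λ.faceDiff b (Λ.faceDiff (a + 1) x) := by
  have := Λ.eqOn_CS (φ := Λ.faceDiff (a + 1) ∘ₗ Λ.faceDiff (b + 1))
    (ψ := Λ.faceDiff b ∘ₗ Λ.faceDiff (a + 1)) (fun f hf => ?_) hx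
  · exact this
  have hb' : b < (Λ.suppList f).length := by rw [Λ.length_suppList hf.1, hf.2]; omega
  simp only [LinearMap.comp_apply, faceDiff_single, map_sub, Λ.face_face hf.1 hab hb']
  abel

lemma bd_bd {r : ℕ} {x : Λ.Chain} (hx : x ∈ Λ.CS (r + 1)) : Λ.bd (Λ.bd x) = 0 := by
  rw [Λ.bd_eq_sum_faceDiff (Λ.bd_mem_CS hx), Λ.bd_eq_sum_faceDiff hx]
  simp only [map_sum, map_zsmul, Finset.smul_sum, smul_smul, ← pow_add]
  exact alternating_double_sum_eq_zero r _ fun a b hab hb => Λ.faceDiff_comm hab hb hx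

end Chains

end KGH.KGraph

open KGH KGraph in
/-- the boundary maps `∂_r` satisfy `∂_r ∘ ∂_{r+1} = 0`, so
`(C_*(Λ), ∂_*)` is a chain complex.  The first conjunct says `∂` maps
`C_{r+1}(Λ)` into `C_r(Λ)`. -/
theorem statement1 {k : ℕ} (Λ : KGraph k) :
    (∀ r : ℕ, ∀ x ∈ Λ.CS (r + 1), Λ.bd x ∈ Λ.CS r) ∧
    (∀ r : ℕ, 1 ≤ r → ∀ x ∈ Λ.CS (r + 1), Λ.bd (Λ.bd x) = 0) :=
  ⟨fun _ _ hx => Λ.bd_mem_CS hx, fun _ _ _ hx => Λ.bd_bd hx⟩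
end

section
/- Let Λ be a k-graph. Every element a of ker(∂₁ : C₁(Λ) → C₀(Λ)) can be written as a finite integer linear combination a = Σ_{i=1}^{n} m_i h_i where each h_i is a simple closed trail in C₁(Λ). -/
namespace KGH
namespace KGraph

variable {k : ℕ} (Λ : KGraph k)

lemma splitAt_eq_s9 (f : Λ.Mor) (m : Fin k → ℕ) (h : Λ.d f = m + (Λ.d f - m))
    (p : Λ.Mor × Λ.Mor)
    (hp : Λ.dom p.1 = Λ.cod p.2 ∧ Λ.d p.1 = m ∧ Λ.d p.2 = Λ.d f - m ∧ Λ.comp p.1 p.2 = f) :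
    Λ.splitAt f m = p := by
  rw [splitAt, dif_pos h]
  obtain ⟨_, huniq⟩ := Classical.choose_spec (Λ.factor f m (Λ.d f - m) h)
  exact (huniq p hp).symm

lemma splitAt_zero (f : Λ.Mor) : Λ.splitAt f 0 = (Λ.idm (Λ.cod f), f) := by
  refine Λ.splitAt_eq_s9 f 0 (by simp) _ ?_
  refine ⟨?_, ?_, ?_, ?_⟩
  · simp [Λ.dom_idm]
  · exact Λ.d_idm _
  · simp
  · exact Λ.idm_comp f

lemma splitAt_full (f : Λ.Mor) : Λ.splitAt f (Λ.d f) = (f, Λ.idm (Λ.dom f)) := by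
  refine Λ.splitAt_eq_s9 f (Λ.d f) (by simp) _ ?_
  refine ⟨?_, rfl, ?_, ?_⟩
  · simp [Λ.cod_idm]
  · simp [Λ.d_idm]
  · exact Λ.comp_idm f

lemma mem_QSet_one {f : Λ.Mor} (hf : f ∈ Λ.QSet 1) : ∃ i, Λ.d f = Pi.single i 1 := by
  obtain ⟨hle, hdeg⟩ := hf
  have hdeg' : ∑ i, Λ.d f i = 1 := hdeg
  have : ∃ i, Λ.d f i ≠ 0 := by
    by_contra hcon
    push_neg at hcon
    simp [hcon] at hdeg'
  obtain ⟨i, hi⟩ := this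
  have hi1 : Λ.d f i = 1 := le_antisymm (hle i) (Nat.one_le_iff_ne_zero.mpr hi)
  have hrest : ∑ j ∈ Finset.univ.erase i, Λ.d f j = 0 := by
    have := Finset.add_sum_erase Finset.univ (Λ.d f) (Finset.mem_univ i)
    omega
  refine ⟨i, funext fun j => ?_⟩
  by_cases hji : j = i
  · subst hji; simp [hi1]
  · have : Λ.d f j = 0 := by
      have := Finset.sum_eq_zero_iff.mp hrest j (by simp [hji])
      exact this
    simp [this, Pi.single_apply, hji]

lemma face_true_of_edge {f : Λ.Mor} {i : Fin k} (hf : Λ.d f = Pi.single i 1) :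
    Λ.face 1 true f = Λ.idm (Λ.dom f) := by
  have hsupp : Λ.suppList f = [i] := by
    have : (Finset.univ.filter fun j => Λ.d f j ≠ 0) = {i} := by
      ext j
      simp [hf, Pi.single_apply]
    rw [suppList, this, Finset.sort_singleton]
  have hface : Λ.face 1 true f = Λ.seg f (Pi.single i 1) (Λ.d f) := by
    rw [face, hsupp]; simp
  rw [hface, seg, ← hf, Λ.splitAt_full]
  have : Λ.d f - Λ.d f = 0 := by simp
  rw [this, Λ.splitAt_zero, Λ.cod_idm]

lemma face_false_of_edge {f : Λ.Mor} {i : Fin k} (hf : Λ.d f = Pi.single i 1) :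
    Λ.face 1 false f = Λ.idm (Λ.cod f) := by
  have hsupp : Λ.suppList f = [i] := by
    have : (Finset.univ.filter fun j => Λ.d f j ≠ 0) = {i} := by
      ext j
      simp [hf, Pi.single_apply]
    rw [suppList, this, Finset.sort_singleton]
  have hface : Λ.face 1 false f = Λ.seg f 0 (Λ.d f - Pi.single i 1) := by
    rw [face, hsupp]; simp
  rw [hface, seg]
  have h0 : Λ.d f - Pi.single i 1 = 0 := by simp [hf]
  rw [h0, Λ.splitAt_zero]
  have : (0 : Fin k → ℕ) - 0 = 0 := by simp
  rw [this, Λ.splitAt_zero]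

lemma bdFun_of_edge {f : Λ.Mor} (hf : f ∈ Λ.QSet 1) :
    Λ.bdFun f = Finsupp.single (Λ.idm (Λ.dom f)) 1 - Finsupp.single (Λ.idm (Λ.cod f)) 1 := by
  obtain ⟨i, hi⟩ := Λ.mem_QSet_one hf
  have hdeg : Λ.deg f = 1 := hf.2
  rw [bdFun, hdeg, Finset.sum_range_one]
  rw [Λ.face_true_of_edge hi, Λ.face_false_of_edge hi]
  simp only [zero_add, pow_one, pow_zero, neg_smul, one_smul]
  abel

/-- the ordinary graph boundary `∂₁` on vertices. -/
noncomputable def bd1 : Λ.Chain →ₗ[ℤ] (Λ.Obj →₀ ℤ) :=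
  Finsupp.lift _ ℤ _ (fun f => Finsupp.single (Λ.dom f) 1 - Finsupp.single (Λ.cod f) 1)

lemma idm_injective : Function.Injective Λ.idm := fun o o' h => by
  rw [← Λ.cod_idm o, h, Λ.cod_idm]

lemma bd1_eq_zero {a : Λ.Chain} (ha : a ∈ Λ.CS 1) (hz : Λ.bd a = 0) : Λ.bd1 a = 0 := by
  have hmap : Λ.bd a = Finsupp.mapDomain Λ.idm (Λ.bd1 a) := by
    rw [bd, Finsupp.lift_apply, bd1, Finsupp.lift_apply, Finsupp.sum, Finsupp.sum,
      Finsupp.mapDomain_finset_sum]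
    refine Finset.sum_congr rfl fun f hf => ?_
    have hfq : f ∈ Λ.QSet 1 := ha (by simpa using hf)
    have hsub : ∀ (x y : Λ.Obj →₀ ℤ), Finsupp.mapDomain Λ.idm (x - y)
        = Finsupp.mapDomain Λ.idm x - Finsupp.mapDomain Λ.idm y :=
      fun x y => map_sub (Finsupp.mapDomain.addMonoidHom Λ.idm) x y
    rw [Λ.bdFun_of_edge hfq, Finsupp.mapDomain_smul, hsub,
      Finsupp.mapDomain_single, Finsupp.mapDomain_single]
  have : Finsupp.mapDomain Λ.idm (Λ.bd1 a) = Finsupp.mapDomain Λ.idm 0 := by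
    rw [← hmap, hz, Finsupp.mapDomain_zero]
  exact Finsupp.mapDomain_injective Λ.idm_injective this

lemma bd1_single (f : Λ.Mor) (c : ℤ) :
    Λ.bd1 (Finsupp.single f c)
      = c • (Finsupp.single (Λ.dom f) 1 - Finsupp.single (Λ.cod f) 1) := by
  rw [bd1, Finsupp.lift_apply, Finsupp.sum_single_index]
  simp

lemma smul_bd1_single {f : Λ.Mor} {c : ℤ} (hc : c = 1 ∨ c = -1) :
    c • (Finsupp.single (Λ.dom f) (1:ℤ) - Finsupp.single (Λ.cod f) 1)
      = Finsupp.single (Λ.sV f c) 1 - Finsupp.single (Λ.rV f c) 1 := by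
  rcases hc with hc | hc <;> subst hc <;>
    simp [sV, rV, smul_sub]
  abel

lemma bd1_trailOf_closed {n : ℕ} {g : Fin (n+1) → Λ.Mor} {m : Fin (n+1) → ℤ}
    (hp : Λ.IsUPath (n+1) g m) (hc : Λ.pathSrc g m = Λ.pathRng g m) :
    Λ.bd1 (Λ.trailOf g m) = 0 := by
  obtain ⟨-, hm, hadj⟩ := hp
  set φ : Fin (n+1) → Λ.Obj := fun i => Λ.sV (g i) (m i) with hφ
  set ψ : Fin (n+1) → Λ.Obj := fun i => Λ.rV (g i) (m i) with hψ
  have key : ∀ i : Fin (n+1), ψ (i + 1) = φ i := by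
    intro i
    by_cases hi : i = Fin.last n
    · subst hi
      rw [Fin.last_add_one]
      exact hc.symm
    · have hlt : (i : ℕ) + 1 < n + 1 := by
        have := Fin.val_lt_last hi
        omega
      have hv : ((i + 1 : Fin (n+1)) : ℕ) = (i : ℕ) + 1 := by
        rw [Fin.val_add_one]
        simp [hi]
      have := (hadj (i : ℕ) hlt).symm
      have h1 : (⟨(i : ℕ), Nat.lt_of_succ_lt hlt⟩ : Fin (n+1)) = i := by
        exact Fin.eta i i.isLt
      have h2 : (⟨(i : ℕ) + 1, hlt⟩ : Fin (n+1)) = i + 1 := by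
        exact Fin.ext hv.symm
      rw [h1, h2] at this
      exact this
  have hsum : ∑ i, Finsupp.single (ψ i) (1:ℤ) = ∑ i, Finsupp.single (φ i) (1:ℤ) := by
    rw [← Equiv.sum_comp (finRotate (n+1)) (fun i => Finsupp.single (ψ i) (1:ℤ))]
    refine Finset.sum_congr rfl fun i _ => ?_
    rw [finRotate_succ_apply, key i]
  rw [trailOf, map_sum]
  have : ∀ i : Fin (n+1), Λ.bd1 (m i • Finsupp.single (g i) (1:ℤ))
      = Finsupp.single (φ i) 1 - Finsupp.single (ψ i) 1 := by
    intro i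
    rw [map_smul, Λ.bd1_single, smul_smul, mul_one, Λ.smul_bd1_single (hm i)]
  rw [Finset.sum_congr rfl fun i _ => this i, Finset.sum_sub_distrib, hsum, sub_self]

open Classical in
lemma bd1_apply (a : Λ.Chain) (v : Λ.Obj) :
    Λ.bd1 a v = (∑ f ∈ a.support, if Λ.dom f = v then a f else 0)
              - (∑ f ∈ a.support, if Λ.cod f = v then a f else 0) := by
  classical
  rw [bd1, Finsupp.lift_apply, Finsupp.sum_apply, Finsupp.sum, ← Finset.sum_sub_distrib]
  refine Finset.sum_congr rfl fun f _ => ?_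
  rw [Finsupp.smul_apply, Finsupp.sub_apply, Finsupp.single_apply, Finsupp.single_apply]
  simp only [smul_eq_mul, mul_sub]
  congr 1 <;> split <;> simp

lemma exists_next {a : Λ.Chain} (h0 : Λ.bd1 a = 0) {f : Λ.Mor} {m : ℤ}
    (hm : m = 1 ∨ m = -1) (hf : 0 < m * a f) :
    ∃ q : Λ.Mor × ℤ, (q.2 = 1 ∨ q.2 = -1) ∧ 0 < q.2 * a q.1 ∧
      Λ.rV q.1 q.2 = Λ.sV f m := by
  classical
  by_contra hcon
  push_neg at hcon
  set v := Λ.sV f m with hv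
  have hout : ∀ f', Λ.cod f' = v → a f' ≤ 0 := by
    intro f' hc
    by_contra hpos
    push_neg at hpos
    have := hcon (f', 1) (Or.inl rfl) (by simpa using hpos)
    simp only [rV, sV] at this
    norm_num at this
    exact this hc
  have hin : ∀ f', Λ.dom f' = v → 0 ≤ a f' := by
    intro f' hc
    by_contra hneg
    push_neg at hneg
    have := hcon (f', -1) (Or.inr rfl) (by simpa using hneg)
    simp only [rV, sV] at this
    norm_num at this
    exact this hc
  have hbal : Λ.bd1 a v = 0 := by rw [h0]; rfl
  rw [Λ.bd1_apply a v, sub_eq_zero] at hbal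
  have hafne : a f ≠ 0 := by rcases hm with h | h <;> subst h <;> intro h' <;>
    rw [h'] at hf <;> simp at hf
  have hfs : f ∈ a.support := Finsupp.mem_support_iff.mpr hafne
  rcases hm with h1 | h1
  · subst h1
    have hafpos : 0 < a f := by simpa using hf
    have hvd : Λ.dom f = v := by simp [hv, sV]
    have hpos : 0 < ∑ f' ∈ a.support, if Λ.dom f' = v then a f' else 0 := by
      refine Finset.sum_pos' (fun f' _ => ?_) ⟨f, hfs, ?_⟩
      · split
        · exact hin _ (by assumption)
        · exact le_refl 0
      · rw [if_pos hvd]; exact hafpos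
    have hneg : (∑ f' ∈ a.support, if Λ.cod f' = v then a f' else 0) ≤ 0 := by
      refine Finset.sum_nonpos (fun f' _ => ?_)
      split
      · exact hout _ (by assumption)
      · exact le_refl 0
    rw [hbal] at hpos
    exact absurd hpos (not_lt.mpr hneg)
  · subst h1
    have hafneg : a f < 0 := by
      have : 0 < -a f := by simpa using hf
      omega
    have hvd : Λ.cod f = v := by simp [hv, sV]
    have hneg : (∑ f' ∈ a.support, if Λ.cod f' = v then a f' else 0) < 0 := by
      have h' : 0 < ∑ f' ∈ a.support, (if Λ.cod f' = v then -a f' else 0) := by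
        refine Finset.sum_pos' (fun f' _ => ?_) ⟨f, hfs, ?_⟩
        · split
          · have := hout _ (by assumption); omega
          · exact le_refl 0
        · rw [if_pos hvd]; omega
      have heq : ∑ f' ∈ a.support, (if Λ.cod f' = v then -a f' else 0)
          = -∑ f' ∈ a.support, (if Λ.cod f' = v then a f' else 0) := by
        rw [← Finset.sum_neg_distrib]
        refine Finset.sum_congr rfl fun f' _ => ?_
        split <;> simp
      rw [heq] at h'
      omega
    have hpos : 0 ≤ ∑ f' ∈ a.support, if Λ.dom f' = v then a f' else 0 := by
      refine Finset.sum_nonneg (fun f' _ => ?_)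
      split
      · exact hin _ (by assumption)
      · exact le_refl 0
    rw [hbal] at hpos
    exact absurd hneg (not_lt.mpr hpos)

lemma exists_good_cycle {a : Λ.Chain} (ha : a ∈ Λ.CS 1) (h0 : Λ.bd1 a = 0)
    (hne : a ≠ 0) :
    ∃ (n : ℕ) (g : Fin (n+1) → Λ.Mor) (m : Fin (n+1) → ℤ),
      Λ.IsUPath (n+1) g m ∧ Λ.pathSrc g m = Λ.pathRng g m ∧
      Function.Injective (fun i => Λ.sV (g i) (m i)) ∧
      ∀ i, 0 < m i * a (g i) := by
  classical
  let G := {p : Λ.Mor × ℤ // (p.2 = 1 ∨ p.2 = -1) ∧ 0 < p.2 * a p.1}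
  have hstep : ∀ p : G, ∃ q : G, Λ.rV q.1.1 q.1.2 = Λ.sV p.1.1 p.1.2 := by
    intro p
    obtain ⟨q, hq1, hq2, hq3⟩ := Λ.exists_next h0 p.2.1 p.2.2
    exact ⟨⟨q, hq1, hq2⟩, hq3⟩
  choose nxt hnxt using hstep
  obtain ⟨f0, hf0⟩ : ∃ f0, a f0 ≠ 0 := by
    by_contra h
    push_neg at h
    exact hne (Finsupp.ext h)
  have hp0 : ((if 0 < a f0 then (1:ℤ) else -1) = 1 ∨ (if 0 < a f0 then (1:ℤ) else -1) = -1)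
      ∧ 0 < (if 0 < a f0 then (1:ℤ) else -1) * a f0 := by
    split
    · refine ⟨Or.inl rfl, ?_⟩; simpa using ‹0 < a f0›
    · refine ⟨Or.inr rfl, ?_⟩
      have : a f0 < 0 := by omega
      simpa using this
  let w : ℕ → G := fun j => nxt^[j] ⟨(f0, if 0 < a f0 then 1 else -1), hp0⟩
  have hw : ∀ j, w (j+1) = nxt (w j) := fun j => Function.iterate_succ_apply' _ _ _
  let φ : ℕ → Λ.Obj := fun j => Λ.sV (w j).1.1 (w j).1.2
  have hlink : ∀ j, Λ.rV (w (j+1)).1.1 (w (j+1)).1.2 = φ j := fun j => by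
    rw [hw]; exact hnxt (w j)
  have hmem : ∀ j, (w j).1.1 ∈ a.support := by
    intro j
    have h2 := (w j).2.2
    rw [Finsupp.mem_support_iff]
    intro h
    rw [h, mul_zero] at h2
    exact lt_irrefl 0 h2
  -- the vertices live in a finite set
  let S : Finset Λ.Obj := a.support.image Λ.dom ∪ a.support.image Λ.cod
  have hφS : ∀ j, φ j ∈ S := by
    intro j
    show Λ.sV (w j).1.1 (w j).1.2 ∈ S
    rw [sV]
    split
    · exact Finset.mem_union_left _ (Finset.mem_image_of_mem _ (hmem j))
    · exact Finset.mem_union_right _ (Finset.mem_image_of_mem _ (hmem j))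
  have hrep : ∃ j', ∃ j, j < j' ∧ φ j = φ j' := by
    obtain ⟨j, j', hjj, hEq⟩ :=
      Finite.exists_ne_map_eq_of_infinite (fun j : ℕ => (⟨φ j, hφS j⟩ : S))
    have hφ : φ j = φ j' := by simpa using hEq
    rcases lt_or_gt_of_ne hjj with h | h
    · exact ⟨j', j, h, hφ⟩
    · exact ⟨j, j', h, hφ.symm⟩
  let J := Nat.find hrep
  obtain ⟨j, hjJ, hφj⟩ : ∃ j, j < J ∧ φ j = φ J := Nat.find_spec hrep
  have hinj0 : ∀ b c, b < c → c < J → φ b ≠ φ c := by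
    intro b c hbc hcJ h
    exact Nat.find_min hrep hcJ ⟨b, hbc, h⟩
  have hinj1 : ∀ b c, j + 1 ≤ b → b < c → c ≤ J → φ b ≠ φ c := by
    intro b c hb hbc hcJ h
    rcases lt_or_eq_of_le hcJ with h' | h'
    · exact hinj0 b c hbc h' h
    · subst h'
      exact hinj0 j b (by omega) (by omega) (hφj.trans h.symm)
  set n := J - j - 1 with hn
  have hJn : J = j + 1 + n := by omega
  refine ⟨n, fun i => (w (j + 1 + (i : ℕ))).1.1, fun i => (w (j + 1 + (i : ℕ))).1.2,
    ⟨?_, ?_, ?_⟩, ?_, ?_, ?_⟩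
  · intro i
    exact ha (by simpa using hmem (j + 1 + (i : ℕ)))
  · intro i
    exact (w (j + 1 + (i : ℕ))).2.1
  · intro t ht
    exact (hlink (j + 1 + t)).symm
  · show Λ.sV (w (j + 1 + ((Fin.last n : Fin (n+1)) : ℕ))).1.1
        ((w (j + 1 + ((Fin.last n : Fin (n+1)) : ℕ))).1.2)
      = Λ.rV (w (j + 1 + ((0 : Fin (n+1)) : ℕ))).1.1
        ((w (j + 1 + ((0 : Fin (n+1)) : ℕ))).1.2)
    simp only [Fin.val_last, Fin.val_zero, Nat.add_zero]
    rw [← hJn, hlink j]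
    exact hφj.symm
  · intro i i' hEq
    simp only at hEq
    by_contra hii
    have hne' : (i : ℕ) ≠ (i' : ℕ) := fun h => hii (Fin.ext h)
    rcases Nat.lt_or_ge (i : ℕ) (i' : ℕ) with h | h
    · exact hinj1 (j + 1 + (i : ℕ)) (j + 1 + (i' : ℕ)) (by omega) (by omega)
        (by have := i'.isLt; omega) hEq
    · have h' : (i' : ℕ) < (i : ℕ) := by omega
      exact hinj1 (j + 1 + (i' : ℕ)) (j + 1 + (i : ℕ)) (by omega) (by omega)
        (by have := i.isLt; omega) hEq.symm
  · intro i
    exact (w (j + 1 + (i : ℕ))).2.2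

lemma trailOf_apply_eq {n : ℕ} {g : Fin n → Λ.Mor} {m : Fin n → ℤ}
    (hg : Function.Injective g) (i : Fin n) : Λ.trailOf g m (g i) = m i := by
  classical
  rw [trailOf, Finset.sum_apply']
  rw [Finset.sum_eq_single i]
  · simp
  · intro j _ hji
    rw [Finsupp.smul_apply, Finsupp.single_apply, if_neg (fun h => hji (hg h))]
    simp
  · simp

lemma trailOf_apply_ne {n : ℕ} {g : Fin n → Λ.Mor} {m : Fin n → ℤ}
    {f : Λ.Mor} (hf : ∀ i, g i ≠ f) : Λ.trailOf g m f = 0 := by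
  classical
  rw [trailOf, Finset.sum_apply']
  refine Finset.sum_eq_zero fun j _ => ?_
  rw [Finsupp.smul_apply, Finsupp.single_apply, if_neg (hf j)]
  simp

lemma trailOf_mem_CS {n : ℕ} {g : Fin n → Λ.Mor} {m : Fin n → ℤ}
    (hg : ∀ i, g i ∈ Λ.QSet 1) : Λ.trailOf g m ∈ Λ.CS 1 := by
  rw [trailOf]
  refine Submodule.sum_mem _ fun i _ => Submodule.smul_mem _ _ ?_
  exact Finsupp.single_mem_supported ℤ 1 (hg i)

lemma decomp (n : ℕ) : ∀ (a : Λ.Chain), a ∈ Λ.CS 1 → Λ.bd1 a = 0 →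
    (a.support.sum fun f => (a f).natAbs) ≤ n →
    ∃ (N : ℕ) (c : Fin N → ℤ) (h : Fin N → Λ.Chain),
      (∀ i, Λ.IsSimpleClosedTrail (h i)) ∧ a = ∑ i, c i • h i := by
  induction n with
  | zero =>
    intro a ha h0 hn
    have hz : a = 0 := by
      rw [← Finsupp.support_eq_empty]
      by_contra hcon
      obtain ⟨f, hf⟩ := Finset.nonempty_iff_ne_empty.mpr hcon
      have h1 : (a f).natAbs ≠ 0 := by
        simpa [Int.natAbs_eq_zero] using Finsupp.mem_support_iff.mp hf
      have h2 : (a f).natAbs ≤ a.support.sum fun f => (a f).natAbs :=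
        Finset.single_le_sum (f := fun f => (a f).natAbs)
          (fun _ _ => Nat.zero_le _) hf
      omega
    exact ⟨0, Fin.elim0, Fin.elim0, fun i => i.elim0, by simp [hz]⟩
  | succ n IH =>
    intro a ha h0 hn
    by_cases hz : a = 0
    · exact ⟨0, Fin.elim0, Fin.elim0, fun i => i.elim0, by simp [hz]⟩
    obtain ⟨L, g, m, hup, hcl, hinj, hsign⟩ := Λ.exists_good_cycle ha h0 hz
    have hm := hup.2.1
    have hginj : Function.Injective g := by
      intro i i' hEq
      have h1 := hsign i
      have h2 := hsign i'
      rw [hEq] at h1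
      have hmm : m i = m i' := by
        rcases hm i with h | h <;> rcases hm i' with h' | h' <;>
          rw [h] at h1 <;> rw [h'] at h2 <;> rw [h, h'] <;> omega
      apply hinj
      show Λ.sV (g i) (m i) = Λ.sV (g i') (m i')
      rw [hEq, hmm]
    set t := Λ.trailOf g m with ht
    have hsct : Λ.IsSimpleClosedTrail t := ⟨L, g, m, hup, hcl, hinj, rfl⟩
    set b := a - t with hb
    have hbC : b ∈ Λ.CS 1 := Submodule.sub_mem _ ha (Λ.trailOf_mem_CS hup.1)
    have hb0 : Λ.bd1 b = 0 := by
      rw [hb, map_sub, h0, Λ.bd1_trailOf_closed hup hcl, sub_self]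
    have hgsupp : ∀ i, g i ∈ a.support := by
      intro i
      rw [Finsupp.mem_support_iff]
      intro hcon
      have := hsign i
      rw [hcon, mul_zero] at this
      exact lt_irrefl 0 this
    have hsupp : b.support ⊆ a.support := by
      intro f hf
      rw [Finsupp.mem_support_iff] at hf ⊢
      intro haf
      apply hf
      have htf : t f = 0 := by
        refine Λ.trailOf_apply_ne fun i hEq => ?_
        have := Finsupp.mem_support_iff.mp (hgsupp i)
        rw [hEq] at this
        exact this haf
      rw [hb, Finsupp.sub_apply, haf, htf, sub_zero]
    have hpt : ∀ f ∈ a.support, (b f).natAbs ≤ (a f).natAbs := by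
      intro f _
      by_cases hr : ∃ i, g i = f
      · obtain ⟨i, rfl⟩ := hr
        have : b (g i) = a (g i) - m i := by
          rw [hb, Finsupp.sub_apply, Λ.trailOf_apply_eq hginj]
        rw [this]
        have hs := hsign i
        rcases hm i with h | h <;> rw [h] at hs ⊢ <;> omega
      · push_neg at hr
        have : b f = a f := by
          rw [hb, Finsupp.sub_apply, Λ.trailOf_apply_ne hr, sub_zero]
        rw [this]
    have hstrict : (b (g 0)).natAbs < (a (g 0)).natAbs := by
      have : b (g 0) = a (g 0) - m 0 := by
        rw [hb, Finsupp.sub_apply, Λ.trailOf_apply_eq hginj]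
      rw [this]
      have hs := hsign 0
      rcases hm 0 with h | h <;> rw [h] at hs ⊢ <;> omega
    have hsum : (b.support.sum fun f => (b f).natAbs) ≤ n := by
      have h1 : (b.support.sum fun f => (b f).natAbs)
          ≤ (a.support.sum fun f => (b f).natAbs) :=
        Finset.sum_le_sum_of_subset hsupp
      have h2 : (a.support.sum fun f => (b f).natAbs)
          < (a.support.sum fun f => (a f).natAbs) :=
        Finset.sum_lt_sum hpt ⟨g 0, hgsupp 0, hstrict⟩
      omega
    obtain ⟨N, c, h, hh, hbe⟩ := IH b hbC hb0 hsum
    refine ⟨N + 1, Fin.cons 1 c, Fin.cons t h, ?_, ?_⟩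
    · intro i
      refine Fin.cases ?_ ?_ i
      · exact hsct
      · exact hh
    · rw [Fin.sum_univ_succ]
      simp only [Fin.cons_zero, Fin.cons_succ, one_smul]
      rw [← hbe, hb]
      abel

end KGraph
end KGH

open KGH KGraph in
/-- every `1`-cycle is an integer combination of simple closed
trails. -/
theorem statement9 {k : ℕ} (Λ : KGraph k) (a : Λ.Chain)
    (ha : a ∈ Λ.CS 1) (hz : Λ.bd a = 0) :
    ∃ (N : ℕ) (c : Fin N → ℤ) (h : Fin N → Λ.Chain),
      (∀ i, Λ.IsSimpleClosedTrail (h i)) ∧ a = ∑ i, c i • h i := by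
  exact Λ.decomp (a.support.sum fun f => (a f).natAbs) a ha (Λ.bd1_eq_zero ha hz) le_rfl
end
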